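/- arXiv:1705.03804 — 2 statements merged into one kernel-verified Lean document; each statement's English description precedes it below -/
import Mathlib

section
/- For every integer n ≥ 2, the cardinality of Tab_n satisfies the recursion #Tab_n = binom(n+1, 2) · #Tab_{n−1} = ((n+1)n/2) · #Tab_{n−1}. -/
/-- A tableau in `Tab_n`. -/
def IsTab (n : ℕ) (T : Finset (ℕ × ℕ)) : Prop :=
  (∀ d ∈ T, 1 ≤ d.1 ∧ d.1 ≤ n ∧ 1 ≤ d.2 ∧ d.2 ≤ 2 * n) ∧
  (∀ i, 1 ≤ i → i ≤ 2 * n → (T.filter (fun d => d.2 = i)).card = 1) ∧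
  (∀ j, 1 ≤ j → j ≤ n → (T.filter (fun d => d.1 = j)).card = 2) ∧
  (∀ d ∈ T, d.1 ≤ d.2)

/-- The set `Tab_n`. -/
def Tab (n : ℕ) : Set (Finset (ℕ × ℕ)) := {T | IsTab n T}

/-- row relabeling after deleting rows p < q -/
def rl (p q r : ℕ) : ℕ := if r < p then r else if r < q then r - 1 else r - 2

/-- inverse relabeling -/
def gl (p q s : ℕ) : ℕ := if s < p then s else if s + 1 < q then s + 1 else s + 2

lemma rl_gl {p q : ℕ} (hpq : p < q) (s : ℕ) : rl p q (gl p q s) = s := by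
  simp only [rl, gl]; split_ifs <;> omega

lemma gl_rl {p q r : ℕ} (hp : 1 ≤ p) (hpq : p < q) (hr1 : r ≠ p) (hr2 : r ≠ q) (hr : 1 ≤ r) :
    gl p q (rl p q r) = r := by
  simp only [rl, gl]; split_ifs <;> omega

lemma gl_ne {p q : ℕ} (hpq : p < q) (s : ℕ) : gl p q s ≠ p ∧ gl p q s ≠ q := by
  simp only [gl]; split_ifs <;> omega

lemma gl_inj {p q : ℕ} (hpq : p < q) {a b : ℕ} (h : gl p q a = gl p q b) : a = b := by
  simp only [gl] at h; split_ifs at h <;> omega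

lemma gl_ge {p q s : ℕ} : s ≤ gl p q s := by
  simp only [gl]; split_ifs <;> omega

lemma row_unique {n : ℕ} {T : Finset (ℕ × ℕ)} (hT : IsTab n T) {d e : ℕ × ℕ}
    (hd : d ∈ T) (he : e ∈ T) (h : d.2 = e.2) : d = e := by
  have hb := hT.1 d hd
  have h1 := hT.2.1 d.2 hb.2.2.1 hb.2.2.2
  rcases Finset.card_eq_one.mp h1 with ⟨a, ha⟩
  have hda : d ∈ T.filter (fun x => x.2 = d.2) := by simp [hd]
  have hea : e ∈ T.filter (fun x => x.2 = d.2) := by simp [he, h.symm]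
  rw [ha, Finset.mem_singleton] at hda hea
  rw [hda, hea]

/-- extraction of the two dots in column n -/
lemma extract {n : ℕ} {T : Finset (ℕ × ℕ)} (hn : 1 ≤ n) (hT : IsTab n T) :
    ∃ p q, n ≤ p ∧ p < q ∧ q ≤ 2 * n ∧ (n, p) ∈ T ∧ (n, q) ∈ T ∧
      (∀ d ∈ T, d.1 = n → d = (n, p) ∨ d = (n, q)) := by
  have h2 := hT.2.2.1 n hn le_rfl
  rcases Finset.card_eq_two.mp h2 with ⟨a, b, hab, hs⟩
  have ha : a ∈ T.filter (fun d => d.1 = n) := by rw [hs]; simp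
  have hb : b ∈ T.filter (fun d => d.1 = n) := by rw [hs]; simp
  rw [Finset.mem_filter] at ha hb
  have hane : a.2 ≠ b.2 := by
    intro h; exact hab (row_unique hT ha.1 hb.1 h)
  have haeq : a = (n, a.2) := by rw [← ha.2]
  have hbeq : b = (n, b.2) := by rw [← hb.2]
  have hmem : ∀ d ∈ T, d.1 = n → d = a ∨ d = b := by
    intro d hd hdn
    have : d ∈ T.filter (fun d => d.1 = n) := by simp [hd, hdn]
    rw [hs] at this; simpa using this
  have hna := hT.2.2.2 a ha.1
  have hnb := hT.2.2.2 b hb.1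
  have h2a := (hT.1 a ha.1).2.2.2
  have h2b := (hT.1 b hb.1).2.2.2
  rcases lt_or_gt_of_ne hane with h | h
  · exact ⟨a.2, b.2, by omega, h, by omega, by rw [← haeq]; exact ha.1,
      by rw [← hbeq]; exact hb.1, fun d hd hdn => by
        rcases hmem d hd hdn with h' | h' <;> [left; right] <;> rw [h'] <;> assumption⟩
  · exact ⟨b.2, a.2, by omega, h, by omega, by rw [← hbeq]; exact hb.1,
      by rw [← haeq]; exact ha.1, fun d hd hdn => by
        rcases hmem d hd hdn with h' | h' <;> [right; left] <;> rw [h'] <;> assumption⟩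

def delT (n p q : ℕ) (T : Finset (ℕ × ℕ)) : Finset (ℕ × ℕ) :=
  (T.filter (fun d => d.1 ≠ n)).image (fun d => (d.1, rl p q d.2))

def insT (n p q : ℕ) (T : Finset (ℕ × ℕ)) : Finset (ℕ × ℕ) :=
  insert (n, p) (insert (n, q) (T.image (fun d => (d.1, gl p q d.2))))

lemma rl_inj {p q : ℕ} (hp : 1 ≤ p) (hpq : p < q) {a b : ℕ}
    (ha1 : a ≠ p) (ha2 : a ≠ q) (hb1 : b ≠ p) (hb2 : b ≠ q)
    (h : rl p q a = rl p q b) : a = b := by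
  simp only [rl] at h; split_ifs at h <;> omega

lemma del_isTab {m p q : ℕ} {T : Finset (ℕ × ℕ)} (hT : IsTab (m + 1) T)
    (hp : m + 1 ≤ p) (hpq : p < q) (hq : q ≤ 2 * (m + 1))
    (hpT : (m + 1, p) ∈ T) (hqT : (m + 1, q) ∈ T)
    (hcol : ∀ d ∈ T, d.1 = m + 1 → d = (m + 1, p) ∨ d = (m + 1, q)) :
    IsTab m (delT (m + 1) p q T) := by
  have hp1 : 1 ≤ p := by omega
  have hrow_ne : ∀ d ∈ T, d.1 ≠ m + 1 → d.2 ≠ p ∧ d.2 ≠ q := by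
    intro d hd hdn
    constructor
    · intro h
      exact hdn (congrArg Prod.fst (row_unique hT hd hpT h))
    · intro h
      exact hdn (congrArg Prod.fst (row_unique hT hd hqT h))
  have hinj : Set.InjOn (fun d : ℕ × ℕ => (d.1, rl p q d.2))
      ↑(T.filter (fun d => d.1 ≠ m + 1)) := by
    intro d hd e he h
    simp only [Finset.coe_filter, Set.mem_setOf_eq] at hd he
    have hd2 := hrow_ne d hd.1 hd.2
    have he2 := hrow_ne e he.1 he.2
    have h' : (d.1, rl p q d.2) = (e.1, rl p q e.2) := h
    obtain ⟨h1, h2⟩ := Prod.mk.inj h'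
    have := rl_inj hp1 hpq hd2.1 hd2.2 he2.1 he2.2 h2
    exact Prod.ext h1 this
  refine ⟨?_, ?_, ?_, ?_⟩
  · intro d hd
    rcases Finset.mem_image.mp hd with ⟨e, he, rfl⟩
    rw [Finset.mem_filter] at he
    have hb := hT.1 e he.1
    have hne := hrow_ne e he.1 he.2
    refine ⟨hb.1, by omega, ?_, ?_⟩ <;> · simp only [rl]; split_ifs <;> omega
  · intro i hi1 hi2
    have hglne := gl_ne hpq i
    have hgl2 : gl p q i ≤ 2 * (m + 1) := by simp only [gl]; split_ifs <;> omega
    have hgl1 : 1 ≤ gl p q i := le_trans hi1 gl_ge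
    rw [delT, Finset.filter_image, Finset.card_image_of_injOn
      (hinj.mono (Finset.coe_subset.mpr (Finset.filter_subset _ _))),
      Finset.filter_filter]
    have : T.filter (fun d => d.1 ≠ m + 1 ∧ rl p q d.2 = i)
        = T.filter (fun d => d.2 = gl p q i) := by
      apply Finset.filter_congr
      intro d hd
      constructor
      · rintro ⟨hdn, hrl⟩
        have hne := hrow_ne d hd hdn
        have hb := hT.1 d hd
        rw [← hrl, gl_rl hp1 hpq hne.1 hne.2 hb.2.2.1]
      · intro h
        have hd2p : d.2 ≠ p := by rw [h]; exact hglne.1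
        have hd2q : d.2 ≠ q := by rw [h]; exact hglne.2
        have hdn : d.1 ≠ m + 1 := by
          intro hn
          rcases hcol d hd hn with h' | h'
          · exact hd2p (congrArg Prod.snd h')
          · exact hd2q (congrArg Prod.snd h')
        exact ⟨hdn, by rw [h, rl_gl hpq]⟩
    rw [this]
    exact hT.2.1 _ hgl1 hgl2
  · intro j hj1 hj2
    rw [delT, Finset.filter_image, Finset.card_image_of_injOn
      (hinj.mono (Finset.coe_subset.mpr (Finset.filter_subset _ _))),
      Finset.filter_filter]
    have : T.filter (fun d => d.1 ≠ m + 1 ∧ d.1 = j)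
        = T.filter (fun d => d.1 = j) := by
      apply Finset.filter_congr
      intro d hd
      constructor
      · exact fun h => h.2
      · exact fun h => ⟨by omega, h⟩
    rw [this]
    exact hT.2.2.1 j hj1 (by omega)
  · intro d hd
    rcases Finset.mem_image.mp hd with ⟨e, he, rfl⟩
    rw [Finset.mem_filter] at he
    have hb := hT.1 e he.1
    have hle := hT.2.2.2 e he.1
    simp only [rl]; split_ifs <;> omega

lemma ins_isTab {m p q : ℕ} {T' : Finset (ℕ × ℕ)} (hT' : IsTab m T')
    (hp : m + 1 ≤ p) (hpq : p < q) (hq : q ≤ 2 * (m + 1)) :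
    IsTab (m + 1) (insT (m + 1) p q T') := by
  have hp1 : 1 ≤ p := by omega
  have hψinj : Function.Injective (fun d : ℕ × ℕ => (d.1, gl p q d.2)) := by
    intro d e h
    have h' : (d.1, gl p q d.2) = (e.1, gl p q e.2) := h
    obtain ⟨h1, h2⟩ := Prod.mk.inj h'
    exact Prod.ext h1 (gl_inj hpq h2)
  have himg_col : ∀ d ∈ T'.image (fun d : ℕ × ℕ => (d.1, gl p q d.2)), d.1 ≤ m := by
    intro d hd
    rcases Finset.mem_image.mp hd with ⟨e, he, rfl⟩
    exact (hT'.1 e he).2.1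
  have himg_row : ∀ d ∈ T'.image (fun d : ℕ × ℕ => (d.1, gl p q d.2)),
      d.2 ≠ p ∧ d.2 ≠ q := by
    intro d hd
    rcases Finset.mem_image.mp hd with ⟨e, he, rfl⟩
    exact gl_ne hpq e.2
  refine ⟨?_, ?_, ?_, ?_⟩
  · intro d hd
    rcases Finset.mem_insert.mp hd with rfl | hd
    · exact ⟨by omega, by omega, by omega, by omega⟩
    rcases Finset.mem_insert.mp hd with rfl | hd
    · exact ⟨by omega, by omega, by omega, by omega⟩
    rcases Finset.mem_image.mp hd with ⟨e, he, rfl⟩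
    have hb := hT'.1 e he
    refine ⟨hb.1, by omega, by simp only [gl]; split_ifs <;> omega,
      by simp only [gl]; split_ifs <;> omega⟩
  · intro i hi1 hi2
    rw [insT, Finset.filter_insert, Finset.filter_insert]
    by_cases hip : p = i
    · subst hip
      rw [if_pos rfl, if_neg (by simp; omega)]
      have : (T'.image (fun d : ℕ × ℕ => (d.1, gl p q d.2))).filter
          (fun d => d.2 = p) = ∅ := by
        apply Finset.filter_false_of_mem
        intro d hd
        exact (himg_row d hd).1
      rw [this]
      simp
    by_cases hiq : q = i
    · subst hiq
      rw [if_neg (show ¬((m+1,p).2 = q) from hip), if_pos rfl]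
      have : (T'.image (fun d : ℕ × ℕ => (d.1, gl p q d.2))).filter
          (fun d => d.2 = q) = ∅ := by
        apply Finset.filter_false_of_mem
        intro d hd
        exact (himg_row d hd).2
      rw [this]
      simp
    · rw [if_neg (by simpa using hip), if_neg (by simpa using hiq),
        Finset.filter_image, Finset.card_image_of_injective _ hψinj]
      have : T'.filter (fun d => gl p q d.2 = i)
          = T'.filter (fun d => d.2 = rl p q i) := by
        apply Finset.filter_congr
        intro d hd
        have hb := hT'.1 d hd
        constructor
        · intro h
          rw [← h, rl_gl hpq]
        · intro h
          rw [h, gl_rl hp1 hpq (Ne.symm hip) (Ne.symm hiq) hi1]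
      rw [this]
      apply hT'.2.1 <;> simp only [rl] <;> split_ifs <;> omega
  · intro j hj1 hj2
    rw [insT, Finset.filter_insert, Finset.filter_insert]
    by_cases hjn : (m + 1 : ℕ) = j
    · subst hjn
      rw [if_pos rfl, if_pos rfl]
      have : (T'.image (fun d : ℕ × ℕ => (d.1, gl p q d.2))).filter
          (fun d => d.1 = m + 1) = ∅ := by
        apply Finset.filter_false_of_mem
        intro d hd
        have := himg_col d hd
        omega
      rw [this]
      have hne : ((m + 1 : ℕ), q) ≠ ((m + 1 : ℕ), p) := by
        simp; omega
      rw [Finset.insert_empty]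
      rw [Finset.card_insert_of_notMem (by simp; omega)]
      simp
    · rw [if_neg (by simpa using hjn), if_neg (by simpa using hjn),
        Finset.filter_image, Finset.card_image_of_injective _ hψinj]
      exact hT'.2.2.1 j hj1 (by omega)
  · intro d hd
    rcases Finset.mem_insert.mp hd with rfl | hd
    · exact hp
    rcases Finset.mem_insert.mp hd with rfl | hd
    · omega
    rcases Finset.mem_image.mp hd with ⟨e, he, rfl⟩
    exact le_trans (le_trans (hT'.2.2.2 e he) gl_ge) le_rfl

lemma del_ins {m p q : ℕ} {T' : Finset (ℕ × ℕ)} (hT' : IsTab m T')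
    (hpq : p < q) : delT (m + 1) p q (insT (m + 1) p q T') = T' := by
  unfold delT insT
  rw [Finset.filter_insert, if_neg (show ¬((m + 1 : ℕ), p).1 ≠ m + 1 by simp),
    Finset.filter_insert, if_neg (show ¬((m + 1 : ℕ), q).1 ≠ m + 1 by simp)]
  rw [Finset.filter_true_of_mem (fun d hd => by
    rcases Finset.mem_image.mp hd with ⟨e, he, rfl⟩
    have := (hT'.1 e he).2.1
    simp; omega)]
  rw [Finset.image_image]
  have : ∀ d ∈ T', ((fun d : ℕ × ℕ => (d.1, rl p q d.2)) ∘
      (fun d : ℕ × ℕ => (d.1, gl p q d.2))) d = id d := by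
    intro d hd
    simp [Function.comp, rl_gl hpq]
  rw [Finset.image_congr this, Finset.image_id]

lemma ins_del {m p q : ℕ} {T : Finset (ℕ × ℕ)} (hT : IsTab (m + 1) T)
    (hp : m + 1 ≤ p) (hpq : p < q)
    (hpT : (m + 1, p) ∈ T) (hqT : (m + 1, q) ∈ T)
    (hcol : ∀ d ∈ T, d.1 = m + 1 → d = (m + 1, p) ∨ d = (m + 1, q)) :
    insT (m + 1) p q (delT (m + 1) p q T) = T := by
  have hp1 : 1 ≤ p := by omega
  have hrow_ne : ∀ d ∈ T, d.1 ≠ m + 1 → d.2 ≠ p ∧ d.2 ≠ q := by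
    intro d hd hdn
    constructor
    · intro h
      exact hdn (congrArg Prod.fst (row_unique hT hd hpT h))
    · intro h
      exact hdn (congrArg Prod.fst (row_unique hT hd hqT h))
  unfold insT delT
  rw [Finset.image_image]
  have : ∀ d ∈ T.filter (fun d => d.1 ≠ m + 1),
      ((fun d : ℕ × ℕ => (d.1, gl p q d.2)) ∘
      (fun d : ℕ × ℕ => (d.1, rl p q d.2))) d = id d := by
    intro d hd
    rw [Finset.mem_filter] at hd
    have hne := hrow_ne d hd.1 hd.2
    have hb := hT.1 d hd.1
    simp [Function.comp, gl_rl hp1 hpq hne.1 hne.2 hb.2.2.1]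
  rw [Finset.image_congr this, Finset.image_id]
  ext d
  simp only [Finset.mem_insert, Finset.mem_filter]
  constructor
  · rintro (rfl | rfl | ⟨hd, _⟩) <;> first | exact hpT | exact hqT | exact hd
  · intro hd
    by_cases hdn : d.1 = m + 1
    · rcases hcol d hd hdn with h | h
      · exact Or.inl h
      · exact Or.inr (Or.inl h)
    · exact Or.inr (Or.inr ⟨hd, hdn⟩)

lemma pairs_card (s : Finset ℕ) :
    (((s ×ˢ s).filter fun y => y.1 < y.2).card) = s.card.choose 2 := by
  rw [← Finset.card_powersetCard 2 s]
  apply Finset.card_bij (fun y _ => ({y.1, y.2} : Finset ℕ))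
  · intro y hy
    rw [Finset.mem_filter, Finset.mem_product] at hy
    rw [Finset.mem_powersetCard]
    refine ⟨?_, ?_⟩
    · intro x hx
      rcases Finset.mem_insert.mp hx with rfl | hx
      · exact hy.1.1
      · rw [Finset.mem_singleton] at hx; subst hx; exact hy.1.2
    · rw [Finset.card_insert_of_notMem (by simp; omega), Finset.card_singleton]
  · intro a ha b hb h
    rw [Finset.mem_filter, Finset.mem_product] at ha hb
    have h1 : a.1 ∈ ({b.1, b.2} : Finset ℕ) := by rw [← h]; simp
    have h2 : a.2 ∈ ({b.1, b.2} : Finset ℕ) := by rw [← h]; simp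
    have h3 : b.1 ∈ ({a.1, a.2} : Finset ℕ) := by rw [h]; simp
    have h4 : b.2 ∈ ({a.1, a.2} : Finset ℕ) := by rw [h]; simp
    simp only [Finset.mem_insert, Finset.mem_singleton] at h1 h2 h3 h4
    have := ha.2; have := hb.2
    ext <;> omega
  · intro t ht
    rw [Finset.mem_powersetCard] at ht
    rcases Finset.card_eq_two.mp ht.2 with ⟨a, b, hab, rfl⟩
    have ha : a ∈ s := ht.1 (by simp)
    have hb : b ∈ s := ht.1 (by simp)
    rcases lt_or_gt_of_ne hab with h | h
    · exact ⟨(a, b), by rw [Finset.mem_filter, Finset.mem_product]; exact ⟨⟨ha, hb⟩, h⟩, rfl⟩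
    · refine ⟨(b, a), by rw [Finset.mem_filter, Finset.mem_product]; exact ⟨⟨hb, ha⟩, h⟩, ?_⟩
      rw [Finset.pair_comm]

lemma ncard_prod {α β : Type*} (A : Set α) (B : Set β) :
    (A ×ˢ B).ncard = A.ncard * B.ncard := by
  rw [← Nat.card_coe_set_eq, ← Nat.card_coe_set_eq, ← Nat.card_coe_set_eq,
    ← Nat.card_prod]
  exact Nat.card_congr (Equiv.Set.prod A B)

lemma mem_insT_col {m p q r : ℕ} {T' : Finset (ℕ × ℕ)} (hT' : IsTab m T')
    (h : (m + 1, r) ∈ insT (m + 1) p q T') : r = p ∨ r = q := by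
  unfold insT at h
  rcases Finset.mem_insert.mp h with h | h
  · left; exact (Prod.mk.inj h.symm).2.symm
  rcases Finset.mem_insert.mp h with h | h
  · right; exact (Prod.mk.inj h.symm).2.symm
  · rcases Finset.mem_image.mp h with ⟨e, he, heq⟩
    have h1 : e.1 = m + 1 := (Prod.mk.inj heq).1
    have := (hT'.1 e he).2.1
    omega

lemma tab_step (m : ℕ) :
    (Tab (m + 1)).ncard = Nat.choose (m + 2) 2 * (Tab m).ncard := by
  classical
  set Pf : Finset (ℕ × ℕ) :=
    ((Finset.Icc (m + 1) (2 * (m + 1))) ×ˢ (Finset.Icc (m + 1) (2 * (m + 1)))).filter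
      (fun y => y.1 < y.2) with hPf
  set S : Set ((ℕ × ℕ) × Finset (ℕ × ℕ)) := ↑Pf ×ˢ Tab m with hS
  set G : (ℕ × ℕ) × Finset (ℕ × ℕ) → Finset (ℕ × ℕ) :=
    fun x => insT (m + 1) x.1.1 x.1.2 x.2 with hG
  have hmemPf : ∀ y : ℕ × ℕ, y ∈ Pf ↔ m + 1 ≤ y.1 ∧ y.1 < y.2 ∧ y.2 ≤ 2 * (m + 1) := by
    intro y
    rw [hPf, Finset.mem_filter, Finset.mem_product, Finset.mem_Icc, Finset.mem_Icc]
    omega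
  have hbij : Set.BijOn G S (Tab (m + 1)) := by
    refine ⟨?_, ?_, ?_⟩
    · rintro ⟨⟨p, q⟩, T'⟩ ⟨hy, hT'⟩
      rw [Finset.mem_coe, hmemPf] at hy
      exact ins_isTab hT' hy.1 hy.2.1 hy.2.2
    · rintro ⟨⟨p, q⟩, T'⟩ ⟨hy, hT'⟩ ⟨⟨p', q'⟩, T''⟩ ⟨hy', hT''⟩ heq
      rw [Finset.mem_coe, hmemPf] at hy hy'
      dsimp only at hy hy'
      simp only [hG] at heq
      have hT'' : IsTab m T'' := hT''
      have hT' : IsTab m T' := hT'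
      have key : ∀ r, r = p ∨ r = q ↔ r = p' ∨ r = q' := by
        intro r
        constructor
        · rintro (rfl | rfl)
          · exact mem_insT_col hT'' (heq ▸ Finset.mem_insert_self _ _)
          · exact mem_insT_col hT''
              (heq ▸ Finset.mem_insert_of_mem (Finset.mem_insert_self _ _))
        · rintro (rfl | rfl)
          · exact mem_insT_col hT' (heq ▸ Finset.mem_insert_self _ _)
          · exact mem_insT_col hT'
              (heq ▸ Finset.mem_insert_of_mem (Finset.mem_insert_self _ _))
      have hpp : p = p' ∧ q = q' := by
        have k1 := (key p).mp (Or.inl rfl)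
        have k2 := (key q).mp (Or.inr rfl)
        have k3 := (key p').mpr (Or.inl rfl)
        have k4 := (key q').mpr (Or.inr rfl)
        obtain ⟨h1, h2, h3⟩ := hy
        obtain ⟨h1', h2', h3'⟩ := hy'
        rcases k1 with e1 | e1 <;> rcases k2 with e2 | e2 <;>
          rcases k3 with e3 | e3 <;> rcases k4 with e4 | e4 <;> omega
      obtain ⟨rfl, rfl⟩ := hpp
      have : T' = T'' := by
        have e1 : delT (m + 1) p q (insT (m + 1) p q T') = T' := del_ins hT' hy.2.1
        have e2 : delT (m + 1) p q (insT (m + 1) p q T'') = T'' := del_ins hT'' hy.2.1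
        rw [← e1, ← e2, heq]
      rw [this]
    · intro T hT
      have hT : IsTab (m + 1) T := hT
      obtain ⟨p, q, hp, hpq, hq, hpT, hqT, hcol⟩ := extract (by omega) hT
      refine ⟨((p, q), delT (m + 1) p q T), ⟨?_, ?_⟩, ?_⟩
      · rw [Finset.mem_coe, hmemPf]
        exact ⟨hp, hpq, hq⟩
      · exact del_isTab hT hp hpq hq hpT hqT hcol
      · exact ins_del hT hp hpq hpT hqT hcol
  have himg : G '' S = Tab (m + 1) := hbij.image_eq
  have h1 : (Tab (m + 1)).ncard = S.ncard := by
    rw [← himg, Set.ncard_image_of_injOn hbij.injOn]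
  rw [h1, hS, ncard_prod, Set.ncard_coe_finset, hPf, pairs_card, Nat.card_Icc]
  congr 2
  omega

/-- For every `n ≥ 2`, `#Tab_n = C(n+1, 2) · #Tab_{n-1} = ((n+1)n/2) · #Tab_{n-1}`. -/
theorem tab_card_recursion (n : ℕ) (hn : 2 ≤ n) :
    (Tab n).ncard = Nat.choose (n + 1) 2 * (Tab (n - 1)).ncard ∧
    (Tab n).ncard = ((n + 1) * n / 2) * (Tab (n - 1)).ncard := by
  obtain ⟨m, rfl⟩ : ∃ m, n = m + 1 := ⟨n - 1, by omega⟩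
  have h := tab_step m
  have h2 : m + 1 - 1 = m := by omega
  have h3 : m + 1 + 1 = m + 2 := by omega
  refine ⟨by rw [h2, h3]; exact h, ?_⟩
  rw [h2, h, Nat.choose_two_right, show m + 2 - 1 = m + 1 by omega,
    show m + 1 + 1 = m + 2 by omega]
end

section
/- For every integer n ≥ 1, there exists a bijection between the set SpDC_{2n} of symplectic Dellac configurations of size 2n and the set of pairs (T, F) where T ∈ Tab_n and F is a subset of the set of free dots of T. -/
/-- A Dellac configuration of size `m`. -/
def IsDellac (m : ℕ) (D : Finset (ℕ × ℕ)) : Prop :=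
  (∀ d ∈ D, 1 ≤ d.1 ∧ d.1 ≤ m ∧ 1 ≤ d.2 ∧ d.2 ≤ 2 * m) ∧
  (∀ i, 1 ≤ i → i ≤ 2 * m → (D.filter (fun d => d.2 = i)).card = 1) ∧
  (∀ j, 1 ≤ j → j ≤ m → (D.filter (fun d => d.1 = j)).card = 2) ∧
  (∀ d ∈ D, d.1 ≤ d.2 ∧ d.2 ≤ d.1 + m)

/-- A symplectic Dellac configuration of size `2n`. -/
def IsSpDC (n : ℕ) (S : Finset (ℕ × ℕ)) : Prop :=
  IsDellac (2 * n) S ∧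
  ∀ j i, 1 ≤ j → j ≤ 2 * n → 1 ≤ i → i ≤ 4 * n →
    ((j, i) ∈ S ↔ (2 * n + 1 - j, 4 * n + 1 - i) ∈ S)

/-- The set of free dots of a tableau `T ∈ Tab_n`: dots `(j, p)` with `p ≥ 2n + 1 - j`. -/
def freeDots (n : ℕ) (T : Finset (ℕ × ℕ)) : Finset (ℕ × ℕ) :=
  T.filter (fun d => 2 * n + 1 ≤ d.1 + d.2)

namespace SpDCBij

def smap (n : ℕ) (d : ℕ × ℕ) : ℕ × ℕ := (2*n+1 - d.1, 4*n+1 - d.2)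
def tmap (n : ℕ) (d : ℕ × ℕ) : ℕ × ℕ := (if d.1 ≤ n then d.1 else 2*n+1 - d.1, d.2)
def bmap (n : ℕ) (F : Finset (ℕ × ℕ)) (d : ℕ × ℕ) : ℕ × ℕ :=
  if d ∈ F then (2*n+1 - d.1, d.2) else d

def phi (n : ℕ) (S : Finset (ℕ × ℕ)) : Finset (ℕ × ℕ) × Finset (ℕ × ℕ) :=
  ((S.filter (fun d => d.2 ≤ 2*n)).image (tmap n),
   (S.filter (fun d => d.2 ≤ 2*n ∧ n < d.1)).image (tmap n))

def psi (n : ℕ) (q : Finset (ℕ × ℕ) × Finset (ℕ × ℕ)) : Finset (ℕ × ℕ) :=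
  (q.1.image (bmap n q.2)) ∪ (q.1.image (bmap n q.2)).image (smap n)

lemma tmap_snd (n : ℕ) (d : ℕ × ℕ) : (tmap n d).2 = d.2 := rfl
lemma smap_fst (n : ℕ) (d : ℕ × ℕ) : (smap n d).1 = 2*n+1 - d.1 := rfl
lemma smap_snd (n : ℕ) (d : ℕ × ℕ) : (smap n d).2 = 4*n+1 - d.2 := rfl
lemma tmap_fst (n : ℕ) (d : ℕ × ℕ) :
    (tmap n d).1 = if d.1 ≤ n then d.1 else 2*n+1 - d.1 := rfl
lemma bmap_snd (n : ℕ) (F : Finset (ℕ × ℕ)) (d : ℕ × ℕ) : (bmap n F d).2 = d.2 := by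
  unfold bmap; split <;> rfl

lemma row_unique {m : ℕ} {S : Finset (ℕ × ℕ)}
    (hrow : ∀ i, 1 ≤ i → i ≤ m → (S.filter (fun d => d.2 = i)).card = 1)
    (hb : ∀ d ∈ S, 1 ≤ d.2 ∧ d.2 ≤ m)
    {d d' : ℕ × ℕ} (hd : d ∈ S) (hd' : d' ∈ S) (h : d.2 = d'.2) : d = d' := by
  obtain ⟨h1, h2⟩ := hb d hd
  have hc := hrow d.2 h1 h2
  have hmem : d ∈ S.filter (fun x => x.2 = d.2) := Finset.mem_filter.mpr ⟨hd, rfl⟩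
  have hmem' : d' ∈ S.filter (fun x => x.2 = d.2) := Finset.mem_filter.mpr ⟨hd', h.symm⟩
  exact Finset.card_le_one.mp (le_of_eq hc) d hmem d' hmem'

lemma row_card_image {f : ℕ × ℕ → ℕ × ℕ} (hf : ∀ d, (f d).2 = d.2)
    {s : Finset (ℕ × ℕ)} {i : ℕ} (h : (s.filter (fun d => d.2 = i)).card = 1) :
    ((s.image f).filter (fun d => d.2 = i)).card = 1 := by
  obtain ⟨a, ha⟩ := Finset.card_eq_one.mp h
  have : (s.image f).filter (fun d => d.2 = i) = {f a} := by
    ext x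
    simp only [Finset.mem_filter, Finset.mem_image, Finset.mem_singleton]
    constructor
    · rintro ⟨⟨b, hb, rfl⟩, hi⟩
      have : b ∈ s.filter (fun d => d.2 = i) := Finset.mem_filter.mpr ⟨hb, by rw [← hf b]; exact hi⟩
      rw [ha, Finset.mem_singleton] at this; rw [this]
    · rintro rfl
      have : a ∈ s.filter (fun d => d.2 = i) := by rw [ha]; exact Finset.mem_singleton_self a
      obtain ⟨has, hai⟩ := Finset.mem_filter.mp this
      exact ⟨⟨a, has, rfl⟩, by rw [hf a]; exact hai⟩
  rw [this, Finset.card_singleton]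

lemma smap_invol {n : ℕ} {d : ℕ × ℕ} (h1 : 1 ≤ d.1) (h2 : d.1 ≤ 2*n)
    (h3 : 1 ≤ d.2) (h4 : d.2 ≤ 4*n) : smap n (smap n d) = d := by
  cases d with
  | mk a b =>
    simp only [smap, Prod.mk.injEq] at *
    omega

lemma mem_smap {n : ℕ} {S : Finset (ℕ × ℕ)} (h : IsSpDC n S) {d : ℕ × ℕ}
    (hd : d ∈ S) : smap n d ∈ S := by
  obtain ⟨⟨hb, _, _, _⟩, hsym⟩ := h
  obtain ⟨h1, h2, h3, h4⟩ := hb d hd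
  have := (hsym d.1 d.2 h1 h2 h3 (by omega)).mp (by simpa using hd)
  simpa [smap] using this

lemma image_smap_eq {n : ℕ} {S : Finset (ℕ × ℕ)} (h : IsSpDC n S) :
    S.image (smap n) = S := by
  apply Finset.Subset.antisymm
  · intro x hx
    obtain ⟨b, hb, rfl⟩ := Finset.mem_image.mp hx
    exact mem_smap h hb
  · intro x hx
    obtain ⟨h1, h2, h3, h4⟩ := h.1.1 x hx
    exact Finset.mem_image.mpr ⟨smap n x, mem_smap h hx, smap_invol h1 (by omega) h3 (by omega)⟩


lemma spdc_halfcol {n : ℕ} {S : Finset (ℕ × ℕ)} (h : IsSpDC n S)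
    {j : ℕ} (h1 : 1 ≤ j) (h2 : j ≤ 2*n) :
    (S.filter (fun d => d.2 ≤ 2*n ∧ d.1 = j)).card
      + (S.filter (fun d => d.2 ≤ 2*n ∧ d.1 = 2*n+1-j)).card = 2 := by
  have hcol := h.1.2.2.1 j h1 (by omega)
  have hsplit := Finset.card_filter_add_card_filter_not
    (s := S.filter (fun d => d.1 = j)) (p := fun d => d.2 ≤ 2*n)
  rw [Finset.filter_filter, Finset.filter_filter, hcol] at hsplit
  have e1 : S.filter (fun d => d.1 = j ∧ d.2 ≤ 2*n) = S.filter (fun d => d.2 ≤ 2*n ∧ d.1 = j) := by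
    apply Finset.filter_congr; intro d _; tauto
  have e2 : (S.filter (fun d => d.1 = j ∧ ¬ d.2 ≤ 2*n)).card
      = (S.filter (fun d => d.2 ≤ 2*n ∧ d.1 = 2*n+1-j)).card := by
    apply Finset.card_nbij' (i := smap n) (j := smap n)
    · intro a ha
      obtain ⟨haS, hc, hr⟩ := Finset.mem_filter.mp ha
      obtain ⟨b1, b2, b3, b4⟩ := h.1.1 a haS
      refine Finset.mem_filter.mpr ⟨mem_smap h haS, ?_, ?_⟩ <;>
        simp only [smap_fst, smap_snd] <;> omega
    · intro a ha
      obtain ⟨haS, hr, hc⟩ := Finset.mem_filter.mp ha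
      obtain ⟨b1, b2, b3, b4⟩ := h.1.1 a haS
      refine Finset.mem_filter.mpr ⟨mem_smap h haS, ?_, ?_⟩ <;>
        simp only [smap_fst, smap_snd] <;> omega
    · intro a ha
      have haS := (Finset.mem_filter.mp ha).1
      obtain ⟨b1, b2, b3, b4⟩ := h.1.1 a haS
      exact smap_invol b1 (by omega) b3 (by omega)
    · intro a ha
      have haS := (Finset.mem_filter.mp ha).1
      obtain ⟨b1, b2, b3, b4⟩ := h.1.1 a haS
      exact smap_invol b1 (by omega) b3 (by omega)
  rw [e1, e2] at hsplit
  exact hsplit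

lemma phi_fst_isTab {n : ℕ} (hn : 1 ≤ n) {S : Finset (ℕ × ℕ)} (h : IsSpDC n S) :
    IsTab n (phi n S).1 := by
  simp only [phi]
  obtain ⟨⟨hb, hrow, hcol, hdg⟩, hsym⟩ := h
  refine ⟨?_, ?_, ?_, ?_⟩
  · intro d hd
    obtain ⟨b, hb', rfl⟩ := Finset.mem_image.mp hd
    obtain ⟨hbS, hb2⟩ := Finset.mem_filter.mp hb'
    obtain ⟨b1, b2, b3, b4⟩ := hb b hbS
    simp only [tmap_fst, tmap_snd]
    split <;> omega
  · intro i hi1 hi2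
    apply row_card_image (tmap_snd n)
    have e : (S.filter (fun d => d.2 ≤ 2*n)).filter (fun d => d.2 = i) = S.filter (fun d => d.2 = i) := by
      rw [Finset.filter_filter]
      apply Finset.filter_congr; intro d _; constructor
      · intro hh; exact hh.2
      · intro hh; exact ⟨by omega, hh⟩
    rw [e]
    exact hrow i hi1 (by omega)
  · intro j hj1 hj2
    have key : ((S.filter (fun d => d.2 ≤ 2*n)).image (tmap n)).filter (fun d => d.1 = j)
        = (S.filter (fun d => d.2 ≤ 2*n ∧ (d.1 = j ∨ d.1 = 2*n+1-j))).image (tmap n) := by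
      ext x
      simp only [Finset.mem_filter, Finset.mem_image]
      constructor
      · rintro ⟨⟨b, hb', rfl⟩, hx⟩
        obtain ⟨hbS, hb2⟩ := hb'
        obtain ⟨b1, b2, b3, b4⟩ := hb b hbS
        refine ⟨b, ⟨hbS, hb2, ?_⟩, rfl⟩
        rw [tmap_fst] at hx
        rcases le_or_gt b.1 n with hc | hc
        · left; rwa [if_pos hc] at hx
        · right; rw [if_neg (by omega)] at hx; omega
      · rintro ⟨b, hb', rfl⟩
        obtain ⟨hbS, hb2, hor⟩ := hb'
        obtain ⟨b1, b2, b3, b4⟩ := hb b hbS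
        refine ⟨⟨b, ⟨hbS, hb2⟩, rfl⟩, ?_⟩
        rw [tmap_fst]
        split <;> omega
    rw [key]
    rw [Finset.card_image_of_injOn]
    · have esplit : S.filter (fun d => d.2 ≤ 2*n ∧ (d.1 = j ∨ d.1 = 2*n+1-j))
          = S.filter (fun d => d.2 ≤ 2*n ∧ d.1 = j) ∪ S.filter (fun d => d.2 ≤ 2*n ∧ d.1 = 2*n+1-j) := by
        ext x
        simp only [Finset.mem_filter, Finset.mem_union]
        tauto
      rw [esplit, Finset.card_union_of_disjoint]
      · exact spdc_halfcol ⟨⟨hb, hrow, hcol, hdg⟩, hsym⟩ hj1 (by omega)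
      · rw [Finset.disjoint_left]
        intro x hx hx'
        have h1 := (Finset.mem_filter.mp hx).2.2
        have h2 := (Finset.mem_filter.mp hx').2.2
        omega
    · intro a ha b hb' hab
      have ha' := (Finset.mem_filter.mp ha).1
      have hb'' := (Finset.mem_filter.mp hb').1
      have hrows : a.2 = b.2 := by
        have := congrArg Prod.snd hab
        simpa [tmap_snd] using this
      exact row_unique hrow (fun d hd => by obtain ⟨x1,x2,x3,x4⟩ := hb d hd; omega) ha' hb'' hrows
  · intro d hd
    obtain ⟨b, hb', rfl⟩ := Finset.mem_image.mp hd
    obtain ⟨hbS, hb2⟩ := Finset.mem_filter.mp hb'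
    obtain ⟨b1, b2, b3, b4⟩ := hb b hbS
    have := (hdg b hbS).1
    simp only [tmap_fst, tmap_snd]
    split <;> omega

lemma phi_snd_subset {n : ℕ} (hn : 1 ≤ n) {S : Finset (ℕ × ℕ)} (h : IsSpDC n S) :
    (phi n S).2 ⊆ freeDots n (phi n S).1 := by
  simp only [phi]
  intro x hx
  obtain ⟨b, hb', rfl⟩ := Finset.mem_image.mp hx
  obtain ⟨hbS, hb2, hb1⟩ := Finset.mem_filter.mp hb'
  obtain ⟨b1, b2, b3, b4⟩ := h.1.1 b hbS
  have hdg := (h.1.2.2.2 b hbS).1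
  refine Finset.mem_filter.mpr ⟨?_, ?_⟩
  · exact Finset.mem_image.mpr ⟨b, Finset.mem_filter.mpr ⟨hbS, hb2⟩, rfl⟩
  · simp only [tmap_fst, tmap_snd]
    rw [if_neg (by omega)]
    omega


lemma B_prop {n : ℕ} {T F : Finset (ℕ × ℕ)} (hT : IsTab n T) (hF : F ⊆ freeDots n T) :
    ∀ x ∈ T.image (bmap n F), 1 ≤ x.1 ∧ x.1 ≤ 2*n ∧ 1 ≤ x.2 ∧ x.2 ≤ 2*n ∧ x.1 ≤ x.2 := by
  intro x hx
  obtain ⟨t, ht, rfl⟩ := Finset.mem_image.mp hx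
  obtain ⟨h1, h2, h3, h4⟩ := hT.1 t ht
  have hd := hT.2.2.2 t ht
  unfold bmap
  split
  · next htF =>
    have hfree := hF htF
    rw [freeDots, Finset.mem_filter] at hfree
    refine ⟨?_, ?_, ?_, ?_, ?_⟩ <;> dsimp only <;> omega
  · exact ⟨h1, by omega, h3, h4, hd⟩

lemma B_row {n : ℕ} {T F : Finset (ℕ × ℕ)} (hT : IsTab n T) {i : ℕ}
    (h1 : 1 ≤ i) (h2 : i ≤ 2*n) :
    ((T.image (bmap n F)).filter (fun d => d.2 = i)).card = 1 :=
  row_card_image (bmap_snd n F) (hT.2.1 i h1 h2)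

lemma psi_isSpDC {n : ℕ} (hn : 1 ≤ n) {T F : Finset (ℕ × ℕ)}
    (hT : IsTab n T) (hF : F ⊆ freeDots n T) : IsSpDC n (psi n (T, F)) := by
  have hBp := B_prop hT hF
  set B := T.image (bmap n F) with hB
  have hBuniq : ∀ d ∈ B, ∀ d' ∈ B, d.2 = d'.2 → d = d' := fun d hd d' hd' h =>
    row_unique (m := 2*n) (fun i a b => B_row hT a b)
      (fun d hd => ⟨(hBp d hd).2.2.1, (hBp d hd).2.2.2.1⟩) hd hd' h
  have hpsi : psi n (T, F) = B ∪ B.image (smap n) := rfl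
  rw [hpsi]
  refine ⟨⟨?_, ?_, ?_, ?_⟩, ?_⟩
  · -- bounds
    intro d hd
    rcases Finset.mem_union.mp hd with hd | hd
    · have := hBp d hd; omega
    · obtain ⟨b, hb, rfl⟩ := Finset.mem_image.mp hd
      have := hBp b hb
      simp only [smap_fst, smap_snd]
      omega
  · -- rows
    intro i hi1 hi2
    rw [Finset.filter_union]
    rcases le_or_gt i (2*n) with hle | hgt
    · have hempty : (B.image (smap n)).filter (fun d => d.2 = i) = ∅ := by
        rw [Finset.filter_eq_empty_iff]
        intro x hx
        obtain ⟨b, hb, rfl⟩ := Finset.mem_image.mp hx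
        have := hBp b hb
        simp only [smap_snd]
        omega
      rw [hempty, Finset.union_empty]
      exact B_row hT hi1 hle
    · have hempty : B.filter (fun d => d.2 = i) = ∅ := by
        rw [Finset.filter_eq_empty_iff]
        intro x hx
        have := hBp x hx
        omega
      rw [hempty, Finset.empty_union]
      have hkey : (B.image (smap n)).filter (fun d => d.2 = i)
          = (B.filter (fun d => d.2 = 4*n+1-i)).image (smap n) := by
        ext x
        simp only [Finset.mem_filter, Finset.mem_image]
        constructor
        · rintro ⟨⟨b, hb, rfl⟩, hi⟩
          have := hBp b hb
          refine ⟨b, ⟨hb, ?_⟩, rfl⟩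
          simp only [smap_snd] at hi
          omega
        · rintro ⟨b, ⟨hb, hb2⟩, rfl⟩
          have := hBp b hb
          exact ⟨⟨b, hb, rfl⟩, by simp only [smap_snd]; omega⟩
      rw [hkey]
      rw [Finset.card_image_of_injOn]
      · exact B_row hT (by omega) (by omega)
      · intro a ha b hb hab
        have ha' := (Finset.mem_filter.mp ha).1
        have hb' := (Finset.mem_filter.mp hb).1
        have h2 : a.2 = b.2 := by
          have := congrArg Prod.snd hab
          simp only [smap_snd] at this
          have := hBp a ha'; have := hBp b hb'
          omega
        exact hBuniq a ha' b hb' h2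
  · -- columns
    intro j hj1 hj2
    rw [Finset.filter_union, Finset.card_union_of_disjoint]
    · have hkey : (B.image (smap n)).filter (fun d => d.1 = j)
          = (B.filter (fun d => d.1 = 2*n+1-j)).image (smap n) := by
        ext x
        simp only [Finset.mem_filter, Finset.mem_image]
        constructor
        · rintro ⟨⟨b, hb, rfl⟩, hj⟩
          have := hBp b hb
          refine ⟨b, ⟨hb, ?_⟩, rfl⟩
          simp only [smap_fst] at hj
          omega
        · rintro ⟨b, ⟨hb, hb2⟩, rfl⟩
          have := hBp b hb
          exact ⟨⟨b, hb, rfl⟩, by simp only [smap_fst]; omega⟩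
      rw [hkey, Finset.card_image_of_injOn]
      · -- cB j + cB (2n+1-j) = 2
        have cBlow : ∀ k, 1 ≤ k → k ≤ n →
            B.filter (fun d => d.1 = k) = T.filter (fun t => t.1 = k ∧ t ∉ F) := by
          intro k hk1 hk2
          ext x
          simp only [Finset.mem_filter, hB, Finset.mem_image]
          constructor
          · rintro ⟨⟨t, ht, rfl⟩, hx⟩
            obtain ⟨t1, t2, t3, t4⟩ := hT.1 t ht
            by_cases htF : t ∈ F
            · exfalso
              rw [bmap, if_pos htF] at hx
              dsimp only at hx
              omega
            · rw [bmap, if_neg htF] at hx ⊢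
              exact ⟨ht, hx, htF⟩
          · rintro ⟨ht, hx, htF⟩
            exact ⟨⟨x, ht, by unfold bmap; rw [if_neg htF]⟩, hx⟩
        have cBhigh : ∀ k, 1 ≤ k → k ≤ n →
            B.filter (fun d => d.1 = 2*n+1-k)
              = (T.filter (fun t => t.1 = k ∧ t ∈ F)).image (fun t => (2*n+1-t.1, t.2)) := by
          intro k hk1 hk2
          ext x
          simp only [Finset.mem_filter, hB, Finset.mem_image]
          constructor
          · rintro ⟨⟨t, ht, rfl⟩, hx⟩
            obtain ⟨t1, t2, t3, t4⟩ := hT.1 t ht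
            by_cases htF : t ∈ F
            · rw [bmap, if_pos htF] at hx ⊢
              dsimp only at hx
              exact ⟨t, ⟨ht, by omega, htF⟩, rfl⟩
            · exfalso
              rw [bmap, if_neg htF] at hx
              omega
          · rintro ⟨t, ⟨ht, ht1, htF⟩, rfl⟩
            obtain ⟨t1, t2, t3, t4⟩ := hT.1 t ht
            refine ⟨⟨t, ht, by unfold bmap; rw [if_pos htF]⟩, ?_⟩
            dsimp only
            omega
        have cBsum : ∀ k, 1 ≤ k → k ≤ n →
            (B.filter (fun d => d.1 = k)).card
              + (B.filter (fun d => d.1 = 2*n+1-k)).card = 2 := by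
          intro k hk1 hk2
          rw [cBlow k hk1 hk2, cBhigh k hk1 hk2, Finset.card_image_of_injOn]
          · have hsplit := Finset.card_filter_add_card_filter_not
              (s := T.filter (fun t => t.1 = k)) (p := fun t => t ∈ F)
            rw [Finset.filter_filter, Finset.filter_filter, hT.2.2.1 k hk1 hk2] at hsplit
            omega
          · intro a ha b hb hab
            have ha' := (Finset.mem_filter.mp ha).1
            have hb' := (Finset.mem_filter.mp hb).1
            have h2 : a.2 = b.2 := by
              have := congrArg Prod.snd hab
              simpa using this
            exact row_unique (m := 2*n) hT.2.1
              (fun d hd => ⟨(hT.1 d hd).2.2.1, (hT.1 d hd).2.2.2⟩) ha' hb' h2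
        rcases le_or_gt j n with hle | hgt
        · exact cBsum j hj1 hle
        · have h := cBsum (2*n+1-j) (by omega) (by omega)
          have hjj : 2*n+1-(2*n+1-j) = j := by omega
          rw [hjj] at h
          omega
      · intro a ha b hb hab
        have ha' := (Finset.mem_filter.mp ha).1
        have hb' := (Finset.mem_filter.mp hb).1
        have h2 : a.2 = b.2 := by
          have := congrArg Prod.snd hab
          simp only [smap_snd] at this
          have := hBp a ha'; have := hBp b hb'
          omega
        exact hBuniq a ha' b hb' h2
    · rw [Finset.disjoint_left]
      intro x hx hx'
      have h1 := (Finset.mem_filter.mp hx).1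
      have h2 := (Finset.mem_filter.mp hx').1
      obtain ⟨b, hb, rfl⟩ := Finset.mem_image.mp h2
      have := hBp b hb
      have := hBp _ h1
      simp only [smap_snd] at this
      omega
  · -- diagonal
    intro d hd
    rcases Finset.mem_union.mp hd with hd | hd
    · have := hBp d hd; omega
    · obtain ⟨b, hb, rfl⟩ := Finset.mem_image.mp hd
      have := hBp b hb
      simp only [smap_fst, smap_snd]
      omega
  · -- symmetry
    have hmemsmap : ∀ x ∈ B ∪ B.image (smap n), smap n x ∈ B ∪ B.image (smap n) := by
      intro x hx
      rcases Finset.mem_union.mp hx with hx | hx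
      · exact Finset.mem_union_right _ (Finset.mem_image_of_mem _ hx)
      · obtain ⟨b, hb, rfl⟩ := Finset.mem_image.mp hx
        have h := hBp b hb
        rw [smap_invol h.1 h.2.1 h.2.2.1 (by omega)]
        exact Finset.mem_union_left _ hb
    intro j i hj1 hj2 hi1 hi2
    constructor
    · intro hmem
      exact hmemsmap _ hmem
    · intro hmem
      have h2 := hmemsmap _ hmem
      have heq : smap n (2*n+1-j, 4*n+1-i) = (j, i) := by
        simp only [smap, Prod.mk.injEq]
        constructor <;> omega
      rwa [heq] at h2


lemma psi_phi {n : ℕ} {S : Finset (ℕ × ℕ)} (h : IsSpDC n S) : psi n (phi n S) = S := by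
  set bot := S.filter (fun d => d.2 ≤ 2*n) with hbot
  set F := (S.filter (fun d => d.2 ≤ 2*n ∧ n < d.1)).image (tmap n) with hF
  have hrowu : ∀ d ∈ S, ∀ d' ∈ S, d.2 = d'.2 → d = d' := fun d hd d' hd' he =>
    row_unique (m := 2*(2*n)) h.1.2.1
      (fun x hx => ⟨(h.1.1 x hx).2.2.1, (h.1.1 x hx).2.2.2⟩) hd hd' he
  have hstep1 : (bot.image (tmap n)).image (bmap n F) = bot := by
    rw [Finset.image_image]
    have heq : ∀ b ∈ bot, (bmap n F ∘ tmap n) b = b := by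
      intro b hbmem
      obtain ⟨hbS, hb2⟩ := Finset.mem_filter.mp hbmem
      obtain ⟨b1, b2, b3, b4⟩ := h.1.1 b hbS
      simp only [Function.comp_apply]
      rcases le_or_gt b.1 n with hc | hc
      · have htm : tmap n b = b := by
          rw [Prod.ext_iff]
          exact ⟨by rw [tmap_fst, if_pos hc], rfl⟩
        rw [htm]
        have hnotF : b ∉ F := by
          intro hbF
          rw [hF] at hbF
          obtain ⟨b', hb', heq'⟩ := Finset.mem_image.mp hbF
          obtain ⟨hb'S, hb'2, hb'1⟩ := Finset.mem_filter.mp hb'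
          have hr : b'.2 = b.2 := by rw [← tmap_snd n b', heq']
          have hbb := hrowu b' hb'S b hbS hr
          rw [hbb] at hb'1
          omega
        unfold bmap
        rw [if_neg hnotF]
      · have hinF : tmap n b ∈ F := by
          rw [hF]
          exact Finset.mem_image.mpr ⟨b, Finset.mem_filter.mpr ⟨hbS, hb2, hc⟩, rfl⟩
        unfold bmap
        rw [if_pos hinF]
        rw [Prod.ext_iff]
        constructor
        · rw [tmap_fst, if_neg (by omega)]
          dsimp only
          omega
        · exact tmap_snd n b
    calc bot.image (bmap n F ∘ tmap n) = bot.image id := Finset.image_congr heq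
      _ = bot := Finset.image_id
  have hstep2 : bot ∪ bot.image (smap n) = S := by
    apply Finset.Subset.antisymm
    · apply Finset.union_subset
      · exact Finset.filter_subset _ _
      · intro x hx
        obtain ⟨b, hb', rfl⟩ := Finset.mem_image.mp hx
        exact mem_smap h (Finset.mem_filter.mp hb').1
    · intro d hd
      obtain ⟨d1, d2, d3, d4⟩ := h.1.1 d hd
      rcases le_or_gt d.2 (2*n) with hc | hc
      · exact Finset.mem_union_left _ (Finset.mem_filter.mpr ⟨hd, hc⟩)
      · apply Finset.mem_union_right
        refine Finset.mem_image.mpr ⟨smap n d, ?_, smap_invol d1 (by omega) d3 (by omega)⟩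
        refine Finset.mem_filter.mpr ⟨mem_smap h hd, ?_⟩
        simp only [smap_snd]
        omega
  show (bot.image (tmap n)).image (bmap n F)
      ∪ ((bot.image (tmap n)).image (bmap n F)).image (smap n) = S
  rw [hstep1, hstep2]

lemma phi_psi {n : ℕ} {T F : Finset (ℕ × ℕ)} (hT : IsTab n T) (hF : F ⊆ freeDots n T) :
    phi n (psi n (T, F)) = (T, F) := by
  have hBp := B_prop hT hF
  set B := T.image (bmap n F) with hB
  have hpsi : psi n (T, F) = B ∪ B.image (smap n) := rfl
  have hFT : F ⊆ T := fun x hx => (Finset.mem_filter.mp (hF hx)).1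
  have hbotB : (B ∪ B.image (smap n)).filter (fun d => d.2 ≤ 2*n) = B := by
    rw [Finset.filter_union]
    have h1 : B.filter (fun d => d.2 ≤ 2*n) = B :=
      Finset.filter_true_of_mem (fun x hx => (hBp x hx).2.2.2.1)
    have h2 : (B.image (smap n)).filter (fun d => d.2 ≤ 2*n) = ∅ := by
      rw [Finset.filter_eq_empty_iff]
      intro x hx
      obtain ⟨b, hb', rfl⟩ := Finset.mem_image.mp hx
      have := hBp b hb'
      simp only [smap_snd]
      omega
    rw [h1, h2, Finset.union_empty]
  have hcomp : ∀ t ∈ T, tmap n (bmap n F t) = t := by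
    intro t ht
    obtain ⟨t1, t2, t3, t4⟩ := hT.1 t ht
    by_cases htF : t ∈ F
    · unfold bmap
      rw [if_pos htF, Prod.ext_iff]
      constructor
      · rw [tmap_fst]
        dsimp only
        rw [if_neg (by omega)]
        omega
      · rfl
    · unfold bmap
      rw [if_neg htF, Prod.ext_iff]
      exact ⟨by rw [tmap_fst, if_pos t2], rfl⟩
  have hfst : (phi n (psi n (T, F))).1 = T := by
    show ((psi n (T, F)).filter (fun d => d.2 ≤ 2*n)).image (tmap n) = T
    rw [hpsi, hbotB, hB, Finset.image_image]
    calc T.image (tmap n ∘ bmap n F) = T.image id :=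
          Finset.image_congr (fun t ht => hcomp t ht)
      _ = T := Finset.image_id
  have hsnd : (phi n (psi n (T, F))).2 = F := by
    show ((psi n (T, F)).filter (fun d => d.2 ≤ 2*n ∧ n < d.1)).image (tmap n) = F
    rw [hpsi]
    have e : (B ∪ B.image (smap n)).filter (fun d => d.2 ≤ 2*n ∧ n < d.1)
        = F.image (fun t => (2*n+1-t.1, t.2)) := by
      ext x
      simp only [Finset.mem_filter, Finset.mem_union]
      constructor
      · rintro ⟨hx, hx2, hx1⟩
        rcases hx with hx | hx
        · obtain ⟨t, ht, rfl⟩ := Finset.mem_image.mp hx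
          obtain ⟨ht1, ht2, ht3, ht4⟩ := hT.1 t ht
          by_cases htF : t ∈ F
          · refine Finset.mem_image.mpr ⟨t, htF, ?_⟩
            unfold bmap
            rw [if_pos htF]
          · exfalso
            unfold bmap at hx1
            rw [if_neg htF] at hx1
            omega
        · exfalso
          obtain ⟨b, hb', rfl⟩ := Finset.mem_image.mp hx
          have := hBp b hb'
          simp only [smap_snd] at hx2
          omega
      · intro hx
        obtain ⟨t, htF, rfl⟩ := Finset.mem_image.mp hx
        have ht := hFT htF
        obtain ⟨t1, t2, t3, t4⟩ := hT.1 t ht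
        refine ⟨Or.inl ?_, ?_, ?_⟩
        · exact Finset.mem_image.mpr ⟨t, ht, by unfold bmap; rw [if_pos htF]⟩
        · dsimp only; omega
        · dsimp only; omega
    rw [e, Finset.image_image]
    have heq : ∀ t ∈ F, (tmap n ∘ fun t => (2*n+1-t.1, t.2)) t = t := by
      intro t htF
      have ht := hFT htF
      obtain ⟨t1, t2, t3, t4⟩ := hT.1 t ht
      simp only [Function.comp_apply]
      rw [Prod.ext_iff]
      constructor
      · rw [tmap_fst]
        dsimp only
        rw [if_neg (by omega)]
        omega
      · rfl
    calc F.image _ = F.image id := Finset.image_congr heq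
      _ = F := Finset.image_id
  exact Prod.ext hfst hsnd

end SpDCBij

/-- For every `n ≥ 1`, there is a bijection between `SpDC_{2n}` and the set of pairs
`(T, F)` where `T ∈ Tab_n` and `F` is a subset of the set of free dots of `T`. -/
theorem spdc_equiv_tab_with_marked_free_dots (n : ℕ) (hn : 1 ≤ n) :
    Nonempty ({S : Finset (ℕ × ℕ) // IsSpDC n S} ≃
      {q : Finset (ℕ × ℕ) × Finset (ℕ × ℕ) // IsTab n q.1 ∧ q.2 ⊆ freeDots n q.1}) := by
  refine ⟨{
    toFun := fun S => ⟨SpDCBij.phi n S.1,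
      SpDCBij.phi_fst_isTab hn S.2, SpDCBij.phi_snd_subset hn S.2⟩
    invFun := fun q => ⟨SpDCBij.psi n q.1, ?_⟩
    left_inv := fun S => Subtype.ext (SpDCBij.psi_phi S.2)
    right_inv := fun q => Subtype.ext
      ((SpDCBij.phi_psi q.2.1 q.2.2).trans (Prod.mk.eta)) }⟩
  exact SpDCBij.psi_isSpDC hn q.2.1 q.2.2
end
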